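/- arXiv:1210.0066 — 6 statements merged into one kernel-verified Lean document; each statement's English description precedes it below -/
import Mathlib

section
/- For p∈(0,1), q with 1/p+1/q=1, u>0, define h_u(t)=min_{0≤s≤u} p(|t|s - s^q/q) (with the convention that the term at s=0 is +∞, i.e. the min is over 0<s≤u). Then for every t∈ℝ, 0 ≤ h_u(t) - |t|^p ≤ u^q. -/
/-!
Since `p / q = p - 1`, the objective is the weighted mean `p (|t| s) + (1 - p) s^q`, which by
weighted AM-GM is at least `(|t| s)^p (s^q)^(1-p) = |t|^p`, with equality at `s₀ = |t|^(p-1)`.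
If `s₀ ≤ u` the infimum is therefore exactly `|t|^p`; otherwise `|t| u < u^q` and evaluating
at `s = u` gives a value below `u^q`.
-/

/-- h_u(t) = inf_{0<s≤u} p(|t|s - s^q/q). -/
noncomputable def hApprox (p q u t : ℝ) : ℝ :=
  sInf ((fun s : ℝ => p * (|t| * s - s ^ q / q)) '' Set.Ioc 0 u)

open Real Set

lemma neg_of_one_div_add_one_div_eq_one {p q : ℝ} (hp : 0 < p) (hp1 : p < 1)
    (hq : 1 / p + 1 / q = 1) : q < 0 :=
  one_div_neg.mp (by linarith [one_lt_one_div hp hp1])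

lemma mul_sub_one_eq_of_one_div_add_one_div_eq_one {p q : ℝ} (hp : p ≠ 0) (hq0 : q ≠ 0)
    (hq : 1 / p + 1 / q = 1) : q * (p - 1) = p := by
  field_simp at hq
  linarith

lemma mul_sub_div_eq_weighted_mean {p q : ℝ} (hp : p ≠ 0) (hq0 : q ≠ 0)
    (hq : 1 / p + 1 / q = 1) (x y : ℝ) : p * (x - y / q) = p * x + (1 - p) * y := by
  have h := mul_sub_one_eq_of_one_div_add_one_div_eq_one hp hq0 hq
  field_simp
  linear_combination y * h

lemma rpow_le_weighted_mean {p q a s : ℝ} (hp : 0 < p) (hp1 : p < 1)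
    (hq : 1 / p + 1 / q = 1) (ha : 0 ≤ a) (hs : 0 < s) :
    a ^ p ≤ p * (a * s) + (1 - p) * s ^ q := by
  have hq0 := (neg_of_one_div_add_one_div_eq_one hp hp1 hq).ne
  have hexp := mul_sub_one_eq_of_one_div_add_one_div_eq_one hp.ne' hq0 hq
  calc a ^ p = (a * s) ^ p * (s ^ q) ^ (1 - p) := by
        rw [mul_rpow ha hs.le, ← rpow_mul hs.le, mul_assoc, ← rpow_add hs,
          show p + q * (1 - p) = 0 by linarith, rpow_zero, mul_one]
    _ ≤ p * (a * s) + (1 - p) * s ^ q :=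
        geom_mean_le_arith_mean2_weighted hp.le (by linarith) (by positivity) (by positivity)
          (by ring)

lemma weighted_mean_rpow_sub_one_eq {p q a : ℝ} (hp : 0 < p) (hp1 : p < 1)
    (hq : 1 / p + 1 / q = 1) (ha : 0 < a) :
    p * (a * a ^ (p - 1)) + (1 - p) * (a ^ (p - 1)) ^ q = a ^ p := by
  have hq0 := (neg_of_one_div_add_one_div_eq_one hp hp1 hq).ne
  have hexp := mul_sub_one_eq_of_one_div_add_one_div_eq_one hp.ne' hq0 hq
  rw [← rpow_mul ha.le, mul_comm (p - 1), hexp, rpow_sub_one ha.ne', mul_div_cancel₀ _ ha.ne']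
  ring

lemma exists_mem_Ioc_weighted_mean_le {p q a u : ℝ} (hp : 0 < p) (hp1 : p < 1)
    (hq : 1 / p + 1 / q = 1) (ha : 0 ≤ a) (hu : 0 < u) :
    ∃ s ∈ Ioc 0 u, p * (a * s) + (1 - p) * s ^ q ≤ a ^ p + u ^ q := by
  by_cases hau : a * u ≤ u ^ q
  · refine ⟨u, ⟨hu, le_rfl⟩, ?_⟩
    have : p * (a * u) + (1 - p) * u ^ q ≤ u ^ q := by nlinarith
    linarith [rpow_nonneg ha p]
  · have hqneg := neg_of_one_div_add_one_div_eq_one hp hp1 hq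
    have hexp := mul_sub_one_eq_of_one_div_add_one_div_eq_one hp.ne' hqneg.ne hq
    have hlt : u ^ (q - 1) < a := by
      rw [rpow_sub_one hu.ne', div_lt_iff₀ hu]
      linarith
    have ha0 : 0 < a := (rpow_pos_of_pos hu _).trans hlt
    refine ⟨a ^ (p - 1), ⟨rpow_pos_of_pos ha0 _, ?_⟩, ?_⟩
    · calc a ^ (p - 1) ≤ (u ^ (q - 1)) ^ (p - 1) :=
            (rpow_lt_rpow_of_neg (rpow_pos_of_pos hu _) hlt (by linarith)).le
        _ = u := by
          rw [← rpow_mul hu.le, show (q - 1) * (p - 1) = 1 by linarith, rpow_one]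
    · rw [weighted_mean_rpow_sub_one_eq hp hp1 hq ha0]
      linarith [rpow_pos_of_pos hu q]

/-- For every t, 0 ≤ h_u(t) - |t|^p ≤ u^q. -/
theorem stmt_1 (p q u : ℝ) (hp : 0 < p) (hp1 : p < 1) (hq : 1 / p + 1 / q = 1)
    (hu : 0 < u) (t : ℝ) :
    0 ≤ hApprox p q u t - |t| ^ p ∧ hApprox p q u t - |t| ^ p ≤ u ^ q := by
  have hq0 := (neg_of_one_div_add_one_div_eq_one hp hp1 hq).ne
  set g : ℝ → ℝ := fun s => p * (|t| * s - s ^ q / q)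
  have hg : ∀ s, g s = p * (|t| * s) + (1 - p) * s ^ q := fun s =>
    mul_sub_div_eq_weighted_mean hp.ne' hq0 hq _ _
  have hlower : ∀ x ∈ g '' Ioc 0 u, |t| ^ p ≤ x := by
    rintro _ ⟨s, hs, rfl⟩
    rw [hg]
    exact rpow_le_weighted_mean hp hp1 hq (abs_nonneg t) hs.1
  obtain ⟨s, hs, hgs⟩ := exists_mem_Ioc_weighted_mean_le hp hp1 hq (abs_nonneg t) hu
  have hge : |t| ^ p ≤ hApprox p q u t := le_csInf ⟨g s, mem_image_of_mem g hs⟩ hlower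
  have hle : hApprox p q u t ≤ g s := csInf_le ⟨_, hlower⟩ (mem_image_of_mem g hs)
  rw [hg] at hle
  constructor <;> linarith
end

section
/- Let h(x)=Σ_{i=1}^n h_u(x_i). Then 0 ≤ h(x) − ‖x‖_p^p ≤ n u^q for every x∈ℝⁿ, where ‖x‖_p^p = Σ_i |x_i|^p. -/
open Real Set

section ReverseYoung

variable {p q a s : ℝ}

lemma mul_sub_rpow_div_eq (hp : p ≠ 0) (hq : 1 / p + 1 / q = 1) :
    p * (a * s - s ^ q / q) = p * (a * s) + (1 - p) * s ^ q := by
  have hpq : p / q = p - 1 := by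
    rw [div_eq_mul_one_div, eq_sub_of_add_eq' hq]
    field_simp
  rw [mul_sub, mul_div_left_comm, ← mul_div_assoc, mul_comm p, mul_div_assoc, hpq]
  ring

lemma rpow_le_weighted_sum (hp0 : 0 ≤ p) (hp1 : p ≤ 1) (hpq : q * (p - 1) = p)
    (ha : 0 ≤ a) (hs : 0 < s) : a ^ p ≤ p * (a * s) + (1 - p) * s ^ q := by
  calc a ^ p = (a * s) ^ p * (s ^ q) ^ (1 - p) := by
        rw [mul_rpow ha hs.le, ← rpow_mul hs.le, mul_assoc, ← rpow_add hs,
          show p + q * (1 - p) = 0 by linarith, rpow_zero, mul_one]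
    _ ≤ p * (a * s) + (1 - p) * s ^ q :=
        geom_mean_le_arith_mean2_weighted hp0 (by linarith) (mul_nonneg ha hs.le)
          (rpow_nonneg hs.le q) (by ring)

lemma weighted_sum_rpow_sub_one (hpq : q * (p - 1) = p) (ha : 0 < a) :
    p * (a * a ^ (p - 1)) + (1 - p) * (a ^ (p - 1)) ^ q = a ^ p := by
  rw [← rpow_mul ha.le, mul_comm (p - 1), hpq, rpow_sub_one ha.ne', mul_div_cancel₀ _ ha.ne']
  ring

lemma exists_weighted_sum_le (hp0 : 0 < p) (hp1 : p < 1) (hpq : q * (p - 1) = p)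
    {u : ℝ} (hu : 0 < u) (ha : 0 ≤ a) :
    ∃ s ∈ Ioc 0 u, p * (a * s) + (1 - p) * s ^ q ≤ a ^ p + u ^ q := by
  rcases le_or_gt (u ^ (q - 1)) a with hua | hau
  · have ha0 : 0 < a := (rpow_pos_of_pos hu _).trans_le hua
    refine ⟨a ^ (p - 1), ⟨rpow_pos_of_pos ha0 _, ?_⟩, ?_⟩
    · calc a ^ (p - 1) ≤ (u ^ (q - 1)) ^ (p - 1) :=
            rpow_le_rpow_of_nonpos (rpow_pos_of_pos hu _) hua (by linarith)
        _ = u := by rw [← rpow_mul hu.le, show (q - 1) * (p - 1) = 1 by linarith, rpow_one]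
    · rw [weighted_sum_rpow_sub_one hpq ha0]
      linarith [rpow_pos_of_pos hu q]
  · refine ⟨u, ⟨hu, le_rfl⟩, ?_⟩
    have hau' : a * u ≤ u ^ q := by
      calc a * u ≤ u ^ (q - 1) * u := by gcongr
        _ = u ^ q := by rw [rpow_sub_one hu.ne', div_mul_cancel₀ _ hu.ne']
    nlinarith [rpow_nonneg ha p]

end ReverseYoung

section hApprox

variable {p q u : ℝ}

lemma hApprox_eq (hp : p ≠ 0) (hq : 1 / p + 1 / q = 1) (t : ℝ) :
    hApprox p q u t = sInf ((fun s : ℝ => p * (|t| * s) + (1 - p) * s ^ q) '' Ioc 0 u) := by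
  simp only [hApprox, mul_sub_rpow_div_eq hp hq]

variable (hp : 0 < p) (hp1 : p < 1) (hq : 1 / p + 1 / q = 1) (hu : 0 < u)
include hp hp1 hq

lemma mul_sub_one_eq_of_add_inv_eq_one : q * (p - 1) = p := by
  have hq0 : q ≠ 0 := by
    rintro rfl
    simp only [div_zero, add_zero, div_eq_one_iff_eq hp.ne'] at hq
    linarith
  field_simp at hq
  linarith

include hu

lemma rpow_abs_le_hApprox (t : ℝ) : |t| ^ p ≤ hApprox p q u t := by
  rw [hApprox_eq hp.ne' hq]
  refine le_csInf (Nonempty.image _ ⟨u, hu, le_rfl⟩) ?_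
  rintro _ ⟨s, ⟨hs, -⟩, rfl⟩
  exact rpow_le_weighted_sum hp.le hp1.le (mul_sub_one_eq_of_add_inv_eq_one hp hp1 hq)
    (abs_nonneg t) hs

lemma hApprox_le_rpow_abs_add (t : ℝ) : hApprox p q u t ≤ |t| ^ p + u ^ q := by
  have hpq := mul_sub_one_eq_of_add_inv_eq_one hp hp1 hq
  obtain ⟨s, hs, hle⟩ := exists_weighted_sum_le hp hp1 hpq hu (abs_nonneg t)
  rw [hApprox_eq hp.ne' hq]
  refine (csInf_le ⟨|t| ^ p, ?_⟩ (mem_image_of_mem _ hs)).trans hle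
  rintro _ ⟨s, ⟨hs, -⟩, rfl⟩
  exact rpow_le_weighted_sum hp.le hp1.le hpq (abs_nonneg t) hs

end hApprox

/-- For h(x) = Σ_i h_u(x_i), one has 0 ≤ h(x) - ‖x‖_p^p ≤ n u^q. -/
theorem stmt_5 (n : ℕ) (p q u : ℝ) (hp : 0 < p) (hp1 : p < 1) (hq : 1 / p + 1 / q = 1)
    (hu : 0 < u) (x : Fin n → ℝ) :
    0 ≤ (∑ i, hApprox p q u (x i)) - ∑ i, |x i| ^ p ∧
      (∑ i, hApprox p q u (x i)) - ∑ i, |x i| ^ p ≤ n * u ^ q := by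
  constructor
  · rw [sub_nonneg]
    exact Finset.sum_le_sum fun i _ => rpow_abs_le_hApprox hp hp1 hq hu (x i)
  · calc (∑ i, hApprox p q u (x i)) - ∑ i, |x i| ^ p
          ≤ (∑ i, (|x i| ^ p + u ^ q)) - ∑ i, |x i| ^ p := by
            gcongr with i
            exact hApprox_le_rpow_abs_add hp hp1 hq hu (x i)
      _ = n * u ^ q := by simp [Finset.sum_add_distrib]
end

section
/- If x* is a local minimizer of F(x)=f(x)+λ‖x‖_p^p with f differentiable, then for every index i, x*_i · ∂f/∂x_i(x*) + λp|x*_i|^p = 0. -/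
/-! If `x i = 0` both terms vanish. Otherwise `u ↦ |u| ^ p` is differentiable at `x i`, with
derivative `p |x i| ^ p / x i`, so the objective has a line derivative along the `i`-th basis
vector, which vanishes at a local minimum; multiplying that equation by `x i` gives the claim. -/

open Finset

theorem hasDerivAt_abs_rpow_of_ne_zero {a : ℝ} (ha : a ≠ 0) (p : ℝ) :
    HasDerivAt (fun u : ℝ => |u| ^ p) (p * |a| ^ p / a) a := by
  have h := (Real.hasDerivAt_rpow_const (p := p) (Or.inl (abs_ne_zero.2 ha))).comp a
    (hasDerivAt_abs ha)
  refine h.congr_deriv ?_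
  rw [Real.rpow_sub_one (abs_ne_zero.2 ha)]
  rcases ha.lt_or_gt with ha | ha
  · simp [sign_neg ha, abs_of_neg ha]
    field_simp
  · simp [sign_pos ha, abs_of_pos ha, mul_div_assoc]

theorem hasLineDerivAt_sum_apply_single {ι : Type*} [Fintype ι] [DecidableEq ι] {g : ℝ → ℝ}
    {g' : ℝ} {x : EuclideanSpace ℝ ι} {i : ι} (hg : HasDerivAt g g' (x i)) :
    HasLineDerivAt ℝ (fun y : EuclideanSpace ℝ ι => ∑ j, g (y j)) g' x
      (EuclideanSpace.single i 1) := by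
  have hsplit : ∀ t : ℝ, ∑ j, g ((x + t • EuclideanSpace.single i 1 : EuclideanSpace ℝ ι) j)
      = g (x i + t) + ∑ j ∈ univ.erase i, g (x j) := by
    intro t
    rw [← add_sum_erase _ _ (mem_univ i)]
    congr 1
    · simp
    · refine sum_congr rfl fun j hj => ?_
      simp [ne_of_mem_erase hj]
  unfold HasLineDerivAt
  simp only [hsplit]
  simpa using HasDerivAt.comp_const_add (x i) 0 (by simpa using hg)

theorem stmt_8_general (n : ℕ) (p lam : ℝ) (hp : 0 < p)
    (f : EuclideanSpace ℝ (Fin n) → ℝ) (hf : Differentiable ℝ f)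
    (x : EuclideanSpace ℝ (Fin n))
    (hmin : IsLocalMin (fun y => f y + lam * ∑ i, |y i| ^ p) x) :
    ∀ i, x i * fderiv ℝ f x (EuclideanSpace.single i 1) + lam * p * |x i| ^ p = 0 := by
  intro i
  rcases eq_or_ne (x i) 0 with hxi | hxi
  · simp [hxi, Real.zero_rpow hp.ne']
  have hF : HasLineDerivAt ℝ (fun y => f y + lam * ∑ j, |y j| ^ p)
      (fderiv ℝ f x (EuclideanSpace.single i 1) + lam * (p * |x i| ^ p / x i)) x
      (EuclideanSpace.single i 1) :=
    ((hf x).hasFDerivAt.hasLineDerivAt _).add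
      ((hasLineDerivAt_sum_apply_single (hasDerivAt_abs_rpow_of_ne_zero hxi p)).const_mul lam)
  have hcrit := hmin.hasLineDerivAt_eq_zero hF
  field_simp at hcrit
  linarith

/-- If x* is a local minimizer of F(x) = f(x) + λ‖x‖_p^p with f differentiable, then
for every i, x*_i · ∂f/∂x_i(x*) + λp|x*_i|^p = 0. -/
theorem stmt_8 (n : ℕ) (p lam : ℝ) (hp : 0 < p) (hp1 : p < 1) (hlam : 0 < lam)
    (f : EuclideanSpace ℝ (Fin n) → ℝ) (hf : Differentiable ℝ f)
    (x : EuclideanSpace ℝ (Fin n))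
    (hmin : IsLocalMin (fun y => f y + lam * ∑ i, |y i| ^ p) x) :
    ∀ i, x i * fderiv ℝ f x (EuclideanSpace.single i 1) + lam * p * |x i| ^ p = 0 :=
  stmt_8_general n p lam hp f hf x hmin
end

section
/- If x* is a local minimizer of F(x)=f(x)+λ‖x‖_p^p and f is twice continuously differentiable near x*, then the matrix (X*)ᵀ∇²f(x*)X* + λp(p−1)Diag(|x*|^p) is positive semidefinite, where X*=Diag(x*). -/
open Filter Topology Set

/-!
Along the curve `t ↦ x + t • (x ⊙ v)`, whose `i`-th coordinate is `x i * (1 + t * v i)`, the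
penalty equals `∑ i, |x i| ^ p * (1 + t * v i) ^ p` for small `t`, which is smooth at `t = 0`
even where coordinates of `x` vanish. The restriction of `F` to this curve therefore has a local
minimum at `0` and is twice differentiable there, with second derivative
`∇²f(x)[x ⊙ v, x ⊙ v] + λ p (p - 1) ∑ i, |x i| ^ p * v i ^ 2`; the one-variable second-order
necessary condition makes it nonnegative.
-/

theorem IsLocalMin.nonneg_of_hasDerivAt_hasDerivAt {φ ψ : ℝ → ℝ} {a L : ℝ}
    (hmin : IsLocalMin φ a) (hφ : ∀ᶠ t in 𝓝 a, HasDerivAt φ (ψ t) t)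
    (hψ : HasDerivAt ψ L a) : 0 ≤ L := by
  -- If `L < 0`, then `ψ` (which vanishes at `a`) is negative just right of `a`, so by the mean
  -- value theorem `φ` drops below `φ a` there.
  by_contra! hL
  have hψa : ψ a = 0 := hmin.hasDerivAt_eq_zero hφ.self_of_nhds
  have hψneg : ∀ᶠ t in 𝓝[>] a, ψ t < 0 := by
    filter_upwards [nhdsGT_le_nhdsNE a
      ((hasDerivAt_iff_tendsto_slope.mp hψ).eventually (eventually_lt_nhds hL)),
      self_mem_nhdsWithin] with t hslope (hat : a < t)
    have h := sub_smul_slope ψ a t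
    rw [smul_eq_mul, vsub_eq_sub, hψa, sub_zero] at h
    exact h ▸ mul_neg_of_pos_of_neg (sub_pos.2 hat) hslope
  obtain ⟨l, u, ⟨hla, hau⟩, hsub⟩ :=
    (hφ.and (hmin.and (eventually_nhdsWithin_iff.mp hψneg))).exists_Ioo_subset
  obtain ⟨t, hat, htu⟩ := exists_between hau
  have hIcc : Icc a t ⊆ Ioo l u := Icc_subset_Ioo hla htu
  obtain ⟨c, hc, hψc⟩ := exists_hasDerivAt_eq_slope φ ψ hat
    (fun s hs => (hsub (hIcc hs)).1.continuousAt.continuousWithinAt)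
    (fun s hs => (hsub (hIcc (Ioo_subset_Icc_self hs))).1)
  have hψc_nonneg : 0 ≤ ψ c := hψc ▸ div_nonneg
    (sub_nonneg.2 (hsub (hIcc (right_mem_Icc.2 hat.le))).2.1) (sub_nonneg.2 hat.le)
  exact ((hsub (hIcc (Ioo_subset_Icc_self hc))).2.2 hc.1).not_ge hψc_nonneg

section

variable {𝕜 : Type*} [NontriviallyNormedField 𝕜] {E F G : Type*}
  [NormedAddCommGroup E] [NormedSpace 𝕜 E] [NormedAddCommGroup F] [NormedSpace 𝕜 F]
  [NormedAddCommGroup G] [NormedSpace 𝕜 G] {f : E → F} {x : E}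

theorem DifferentiableAt.hasDerivAt_comp_add_smul {d : E} {t : 𝕜}
    (hf : DifferentiableAt 𝕜 f (x + t • d)) :
    HasDerivAt (fun s : 𝕜 => f (x + s • d)) (fderiv 𝕜 f (x + t • d) d) t := by
  have hline : HasDerivAt (fun s : 𝕜 => x + s • d) d t := by
    simpa using ((hasDerivAt_id t).smul_const d).const_add x
  exact hf.hasFDerivAt.comp_hasDerivAt t hline

theorem fderiv_clm_apply_const {g : E → F →L[𝕜] G} (hg : DifferentiableAt 𝕜 g x)
    (u : E) (w : F) : fderiv 𝕜 (fun y => g y w) x u = fderiv 𝕜 g x u w := by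
  rw [fderiv_clm_apply hg (differentiableAt_const w)]
  simp

theorem ContDiffAt.eventually_hasDerivAt_comp_add_smul (hf : ContDiffAt 𝕜 1 f x) (d : E) :
    ∀ᶠ t in 𝓝 (0 : 𝕜), HasDerivAt (fun s : 𝕜 => f (x + s • d)) (fderiv 𝕜 f (x + t • d) d) t := by
  have hline : Tendsto (fun t : 𝕜 => x + t • d) (𝓝 0) (𝓝 x) := by
    have : Continuous fun t : 𝕜 => x + t • d := by fun_prop
    simpa using this.tendsto 0
  filter_upwards [hline.eventually (hf.eventually (by simp))] with t ht
  exact (ht.differentiableAt one_ne_zero).hasDerivAt_comp_add_smul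

theorem ContDiffAt.hasDerivAt_fderiv_comp_add_smul (hf : ContDiffAt 𝕜 2 f x) (d : E) :
    HasDerivAt (fun t : 𝕜 => fderiv 𝕜 f (x + t • d) d) (fderiv 𝕜 (fderiv 𝕜 f) x d d) 0 := by
  have hf' : DifferentiableAt 𝕜 (fderiv 𝕜 f) x :=
    (hf.fderiv_right (m := 1) (by norm_num)).differentiableAt one_ne_zero
  have hfd : DifferentiableAt 𝕜 (fun y => fderiv 𝕜 f y d) (x + (0 : 𝕜) • d) := by
    simpa using hf'.clm_apply (differentiableAt_const d)
  simpa [fderiv_clm_apply_const hf'] using hfd.hasDerivAt_comp_add_smul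

end

theorem ContinuousLinearMap.apply_apply_eq_sum_single {ι F : Type*} [Fintype ι] [DecidableEq ι]
    [NormedAddCommGroup F] [NormedSpace ℝ F]
    (B : EuclideanSpace ℝ ι →L[ℝ] EuclideanSpace ℝ ι →L[ℝ] F) (d e : EuclideanSpace ℝ ι) :
    B d e = ∑ i, ∑ j, (d i * e j) • B (EuclideanSpace.single i 1) (EuclideanSpace.single j 1) := by
  conv_lhs => rw [← (EuclideanSpace.basisFun ι ℝ).sum_repr d,
    ← (EuclideanSpace.basisFun ι ℝ).sum_repr e]
  simp only [map_sum, map_smul, FunLike.coe_sum, FunLike.coe_smul,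
    Finset.sum_apply, Pi.smul_apply, Finset.smul_sum, smul_smul, EuclideanSpace.basisFun_repr,
    EuclideanSpace.basisFun_apply]
  exact Finset.sum_comm.trans (Finset.sum_congr rfl fun i _ => Finset.sum_congr rfl fun j _ => by
    rw [mul_comm])

section

variable {ι : Type*} [Fintype ι]

theorem hasDerivAt_one_add_mul_rpow (p v : ℝ) {t : ℝ} (h : 1 + t * v ≠ 0) :
    HasDerivAt (fun s => (1 + s * v) ^ p) (v * p * (1 + t * v) ^ (p - 1)) t := by
  have hlin : HasDerivAt (fun s : ℝ => 1 + s * v) v t := by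
    simpa using (hasDerivAt_mul_const v).const_add 1
  exact hlin.rpow_const (Or.inl h)

theorem eventually_hasDerivAt_sum_mul_rpow (c v : ι → ℝ) (p : ℝ) :
    ∀ᶠ t in 𝓝 (0 : ℝ), HasDerivAt (fun s => ∑ i, c i * (1 + s * v i) ^ p)
      (∑ i, c i * (v i * p * (1 + t * v i) ^ (p - 1))) t := by
  have hne : ∀ i, ∀ᶠ t in 𝓝 (0 : ℝ), 1 + t * v i ≠ 0 := fun i =>
    (by fun_prop : ContinuousAt (fun t : ℝ => 1 + t * v i) 0).eventually_ne (by simp)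
  filter_upwards [eventually_all.2 hne] with t ht
  exact HasDerivAt.fun_sum fun i _ => (hasDerivAt_one_add_mul_rpow p (v i) (ht i)).const_mul (c i)

theorem hasDerivAt_sum_mul_mul_rpow_sub_one (c v : ι → ℝ) (p : ℝ) :
    HasDerivAt (fun t => ∑ i, c i * (v i * p * (1 + t * v i) ^ (p - 1)))
      (p * (p - 1) * ∑ i, c i * v i ^ 2) 0 := by
  rw [Finset.mul_sum]
  refine HasDerivAt.fun_sum fun i _ => ?_
  refine (((hasDerivAt_one_add_mul_rpow (p - 1) (v i) (t := 0) (by simp)).const_mul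
    (v i * p)).const_mul (c i)).congr_deriv ?_
  simp only [zero_mul, add_zero, Real.one_rpow]
  ring

theorem IsLocalMin.comp_add_smul_mul {f : EuclideanSpace ℝ ι → ℝ} {p lam : ℝ}
    {x : EuclideanSpace ℝ ι} (hmin : IsLocalMin (fun y => f y + lam * ∑ i, |y i| ^ p) x)
    (v : ι → ℝ) :
    IsLocalMin (fun t : ℝ => f (x + t • WithLp.toLp 2 fun i => x i * v i) +
      lam * ∑ i, |x i| ^ p * (1 + t * v i) ^ p) 0 := by
  set d : EuclideanSpace ℝ ι := WithLp.toLp 2 fun i => x i * v i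
  have hcoord : ∀ (t : ℝ) i, (x + t • d) i = x i * (1 + t * v i) := fun t i => by
    simp only [d, PiLp.add_apply, PiLp.smul_apply, smul_eq_mul]
    ring
  have hpos : ∀ i, ∀ᶠ t in 𝓝 (0 : ℝ), 0 < 1 + t * v i := fun i =>
    continuousAt_const.eventually_lt (by fun_prop) (by simp)
  have hline : ContinuousAt (fun t : ℝ => x + t • d) 0 := by fun_prop
  have hmin' : IsLocalMin (fun y => f y + lam * ∑ i, |y i| ^ p) (x + (0 : ℝ) • d) := by
    simpa using hmin
  refine (hmin'.comp_continuous (g := fun t : ℝ => x + t • d) hline).congr ?_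
  filter_upwards [eventually_all.2 hpos] with t ht
  simp only [Function.comp_apply, hcoord, abs_mul, abs_of_pos (ht _),
    Real.mul_rpow (abs_nonneg _) (ht _).le]

end

theorem stmt_9_general (n : ℕ) (p lam : ℝ)
    (f : EuclideanSpace ℝ (Fin n) → ℝ)
    (x : EuclideanSpace ℝ (Fin n)) (hf : ContDiffAt ℝ 2 f x)
    (hmin : IsLocalMin (fun y => f y + lam * ∑ i, |y i| ^ p) x) :
    ∀ v : Fin n → ℝ,
      0 ≤ (∑ i, ∑ j, v i *
            (x i * fderiv ℝ (fun y => fderiv ℝ f y (EuclideanSpace.single j 1)) x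
              (EuclideanSpace.single i 1) * x j) * v j) +
          lam * p * (p - 1) * ∑ i, |x i| ^ p * (v i) ^ 2 := by
  intro v
  set d : EuclideanSpace ℝ (Fin n) := WithLp.toLp 2 fun i => x i * v i
  have hderiv := ((hf.of_le one_le_two).eventually_hasDerivAt_comp_add_smul d).and
    (eventually_hasDerivAt_sum_mul_rpow (fun i => |x i| ^ p) v p)
  have hL := (hmin.comp_add_smul_mul v).nonneg_of_hasDerivAt_hasDerivAt
    (hderiv.mono fun t ht => ht.1.add (ht.2.const_mul lam))
    ((hf.hasDerivAt_fderiv_comp_add_smul d).add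
      ((hasDerivAt_sum_mul_mul_rpow_sub_one (fun i => |x i| ^ p) v p).const_mul lam))
  have hf' : DifferentiableAt ℝ (fderiv ℝ f) x :=
    (hf.fderiv_right (m := 1) (by norm_num)).differentiableAt one_ne_zero
  have hHess : fderiv ℝ (fderiv ℝ f) x d d = ∑ i, ∑ j, v i *
      (x i * fderiv ℝ (fun y => fderiv ℝ f y (EuclideanSpace.single j 1)) x
        (EuclideanSpace.single i 1) * x j) * v j := by
    rw [ContinuousLinearMap.apply_apply_eq_sum_single]
    refine Finset.sum_congr rfl fun i _ => Finset.sum_congr rfl fun j _ => ?_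
    rw [fderiv_clm_apply_const hf', smul_eq_mul]
    simp only [d]
    ring
  rw [← hHess]
  linarith

/-- If x* is a local minimizer of F(x) = f(x) + λ‖x‖_p^p with f twice continuously
differentiable near x*, then (X*)ᵀ∇²f(x*)X* + λp(p-1)Diag(|x*|^p) is positive
semidefinite. -/
theorem stmt_9 (n : ℕ) (p lam : ℝ) (hp : 0 < p) (hp1 : p < 1) (hlam : 0 < lam)
    (f : EuclideanSpace ℝ (Fin n) → ℝ)
    (x : EuclideanSpace ℝ (Fin n)) (hf : ContDiffAt ℝ 2 f x)
    (hmin : IsLocalMin (fun y => f y + lam * ∑ i, |y i| ^ p) x) :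
    ∀ v : Fin n → ℝ,
      0 ≤ (∑ i, ∑ j, v i *
            (x i * fderiv ℝ (fun y => fderiv ℝ f y (EuclideanSpace.single j 1)) x
              (EuclideanSpace.single i 1) * x j) * v j) +
          lam * p * (p - 1) * ∑ i, |x i| ^ p * (v i) ^ 2 :=
  stmt_9_general n p lam f x hf hmin
end

section
/- Let x* be a second-order stationary point of F(x)=f(x)+λ‖x‖_p^p, i.e. (X*)ᵀ∇²f(x*)X* + λp(p−1)Diag(|x*|^p) ⪰ 0, where f is twice continuously differentiable near x* and ∇f is L_f-Lipschitz on ℝⁿ. Then every nonzero entry x*_i satisfies |x*_i| ≥ (λp(1−p)/L_f)^{1/(2−p)}. -/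
/-!
Testing the second-order condition with `v = eᵢ` gives
`λp(1-p)|xᵢ|^p ≤ xᵢ² ∂ᵢ∂ᵢf(x)`. Since `∇f` is `L_f`-Lipschitz, so is `y ↦ ∂ᵢf(y)`, whence
`∂ᵢ∂ᵢf(x) ≤ L_f` (this holds even where `∂ᵢf` is not differentiable, as `fderiv` is then `0`).
Dividing by `|xᵢ|^p` leaves `λp(1-p)/L_f ≤ |xᵢ|^(2-p)`.
-/

theorem norm_fderiv_sub_fderiv_eq_norm_gradient_sub {E : Type*} [NormedAddCommGroup E]
    [InnerProductSpace ℝ E] [CompleteSpace E] (f : E → ℝ) (a b : E) :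
    ‖fderiv ℝ f a - fderiv ℝ f b‖ = ‖gradient f a - gradient f b‖ := by
  rw [gradient, gradient, ← map_sub, LinearIsometryEquiv.norm_map]

theorem fderiv_fderiv_apply_le_of_lipschitz {E : Type*} [NormedAddCommGroup E] [NormedSpace ℝ E]
    {f : E → ℝ} {L : ℝ} (hL : 0 ≤ L)
    (hlip : ∀ a b, ‖fderiv ℝ f a - fderiv ℝ f b‖ ≤ L * ‖a - b‖) (x e : E) :
    fderiv ℝ (fun y => fderiv ℝ f y e) x e ≤ L * ‖e‖ ^ 2 := by
  have hnorm : ‖fderiv ℝ (fun y => fderiv ℝ f y e) x‖ ≤ L * ‖e‖ := by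
    refine norm_fderiv_le_of_lip' ℝ (by positivity) (Filter.Eventually.of_forall fun y => ?_)
    calc ‖fderiv ℝ f y e - fderiv ℝ f x e‖ = ‖(fderiv ℝ f y - fderiv ℝ f x) e‖ := rfl
      _ ≤ ‖fderiv ℝ f y - fderiv ℝ f x‖ * ‖e‖ := ContinuousLinearMap.le_opNorm _ _
      _ ≤ L * ‖y - x‖ * ‖e‖ := by gcongr; exact hlip y x
      _ = L * ‖e‖ * ‖y - x‖ := by ring
  calc fderiv ℝ (fun y => fderiv ℝ f y e) x e ≤ ‖fderiv ℝ (fun y => fderiv ℝ f y e) x e‖ :=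
        Real.le_norm_self _
    _ ≤ ‖fderiv ℝ (fun y => fderiv ℝ f y e) x‖ * ‖e‖ := ContinuousLinearMap.le_opNorm _ _
    _ ≤ L * ‖e‖ * ‖e‖ := by gcongr
    _ = L * ‖e‖ ^ 2 := by ring

theorem sum_sum_pi_single_mul_mul {ι R : Type*} [Fintype ι] [DecidableEq ι] [Semiring R]
    (M : ι → ι → R) (k : ι) :
    ∑ i, ∑ j, (Pi.single k 1 : ι → R) i * M i j * (Pi.single k 1 : ι → R) j = M k k := by
  simp [Pi.single_apply]

theorem sum_mul_pi_single_sq {ι R : Type*} [Fintype ι] [DecidableEq ι] [Semiring R]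
    (a : ι → R) (k : ι) :
    ∑ i, a i * (Pi.single k 1 : ι → R) i ^ 2 = a k := by
  simp [Pi.single_apply]

theorem rpow_one_div_le_abs_of_mul_rpow_le_mul_sq {c L p t : ℝ} (hc : 0 ≤ c) (hL : 0 < L)
    (hp : p < 2) (ht : t ≠ 0) (h : c * |t| ^ p ≤ L * t ^ 2) :
    (c / L) ^ (1 / (2 - p)) ≤ |t| := by
  have habs : 0 < |t| := abs_pos.mpr ht
  have h2p : 0 < 2 - p := by linarith
  have hsplit : t ^ 2 = |t| ^ p * |t| ^ (2 - p) := by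
    rw [← Real.rpow_add habs, add_sub_cancel, Real.rpow_two, sq_abs]
  have hdiv : c / L ≤ |t| ^ (2 - p) := by
    rw [div_le_iff₀ hL]
    refine le_of_mul_le_mul_right ?_ (Real.rpow_pos_of_pos habs p)
    rw [hsplit] at h
    linarith
  calc (c / L) ^ (1 / (2 - p)) ≤ (|t| ^ (2 - p)) ^ (1 / (2 - p)) := by gcongr
    _ = |t| := by rw [← Real.rpow_mul habs.le, mul_one_div_cancel h2p.ne', Real.rpow_one]

theorem stmt_10_general (n : ℕ) (p lam Lf : ℝ) (hp : 0 < p) (hp1 : p < 1) (hlam : 0 < lam)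
    (hLf : 0 < Lf) (f : EuclideanSpace ℝ (Fin n) → ℝ)
    (x : EuclideanSpace ℝ (Fin n))
    (hlip : ∀ a b : EuclideanSpace ℝ (Fin n), ‖gradient f a - gradient f b‖ ≤ Lf * ‖a - b‖)
    (hstat : ∀ v : Fin n → ℝ,
      0 ≤ (∑ i, ∑ j, v i *
            (x i * fderiv ℝ (fun y => fderiv ℝ f y (EuclideanSpace.single j 1)) x
              (EuclideanSpace.single i 1) * x j) * v j) +
          lam * p * (p - 1) * ∑ i, |x i| ^ p * (v i) ^ 2) :
    ∀ i, x i ≠ 0 → (lam * p * (1 - p) / Lf) ^ ((1 : ℝ) / (2 - p)) ≤ |x i| := by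
  intro i hi
  set e : EuclideanSpace ℝ (Fin n) := EuclideanSpace.single i 1
  have hdiag : fderiv ℝ (fun y => fderiv ℝ f y e) x e ≤ Lf := by
    simpa [e] using fderiv_fderiv_apply_le_of_lipschitz hLf.le
      (fun a b => (norm_fderiv_sub_fderiv_eq_norm_gradient_sub f a b).trans_le (hlip a b)) x e
  have hi_stat := hstat (Pi.single i 1)
  rw [sum_sum_pi_single_mul_mul, sum_mul_pi_single_sq] at hi_stat
  refine rpow_one_div_le_abs_of_mul_rpow_le_mul_sq
    (mul_nonneg (by positivity) (by linarith)) hLf (by linarith) hi ?_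
  nlinarith [sq_nonneg (x i)]

/-- Lower bound on nonzero entries of second-order stationary points:
if (X*)ᵀ∇²f(x*)X* + λp(p-1)Diag(|x*|^p) ⪰ 0, f is C² near x* and ∇f is
L_f-Lipschitz, then |x*_i| ≥ (λp(1-p)/L_f)^(1/(2-p)) for every nonzero x*_i. -/
theorem stmt_10 (n : ℕ) (p lam Lf : ℝ) (hp : 0 < p) (hp1 : p < 1) (hlam : 0 < lam)
    (hLf : 0 < Lf) (f : EuclideanSpace ℝ (Fin n) → ℝ)
    (x : EuclideanSpace ℝ (Fin n)) (hf : ContDiffAt ℝ 2 f x)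
    (hlip : ∀ a b : EuclideanSpace ℝ (Fin n), ‖gradient f a - gradient f b‖ ≤ Lf * ‖a - b‖)
    (hstat : ∀ v : Fin n → ℝ,
      0 ≤ (∑ i, ∑ j, v i *
            (x i * fderiv ℝ (fun y => fderiv ℝ f y (EuclideanSpace.single j 1)) x
              (EuclideanSpace.single i 1) * x j) * v j) +
          lam * p * (p - 1) * ∑ i, |x i| ^ p * (v i) ^ 2) :
    ∀ i, x i ≠ 0 → (lam * p * (1 - p) / Lf) ^ ((1 : ℝ) / (2 - p)) ≤ |x i| :=
  stmt_10_general n p lam Lf hp hp1 hlam hLf f x hlip hstat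
end

section
/- Let f be differentiable on ℝⁿ with ∇f L_f-Lipschitz, and let w be convex. If x^{k+1} minimizes x ↦ f(x^k)+∇f(x^k)ᵀ(x−x^k)+(L_k/2)‖x−x^k‖² + w(x), then f(x^{k+1})+w(x^{k+1}) ≤ f(x^k)+w(x^k) − (L_k − L_f/2)‖x^{k+1}−x^k‖₂². -/
lemma descent_lemma {E : Type*} [NormedAddCommGroup E] [InnerProductSpace ℝ E] [CompleteSpace E]
    (f : E → ℝ) (hf : Differentiable ℝ f) (Lf : ℝ) (hLf : 0 ≤ Lf)
    (hlip : ∀ a b : E, ‖gradient f a - gradient f b‖ ≤ Lf * ‖a - b‖) (a b : E) :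
    f b ≤ f a + inner ℝ (gradient f a) (b - a) + Lf / 2 * ‖b - a‖ ^ 2 := by
  set d := b - a with hd
  set φ : ℝ → ℝ := fun t => f (a + t • d) - t * inner ℝ (gradient f a) d - Lf / 2 * ‖d‖ ^ 2 * t ^ 2
    with hφ
  have hline : ∀ t : ℝ, HasDerivAt (fun t : ℝ => a + t • d) d t := by
    intro t
    simpa using ((hasDerivAt_id t).smul_const d).const_add a
  have hinner : ∀ x : E, fderiv ℝ f x d = inner ℝ (gradient f x) d := by
    intro x
    rw [((hf x).hasGradientAt.hasFDerivAt).fderiv, InnerProductSpace.toDual_apply_apply]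
  have hderiv : ∀ t : ℝ, HasDerivAt φ
      ((inner ℝ (gradient f (a + t • d)) d : ℝ) - inner ℝ (gradient f a) d - Lf * ‖d‖ ^ 2 * t) t := by
    intro t
    have h1 : HasDerivAt (fun t : ℝ => f (a + t • d)) (inner ℝ (gradient f (a + t • d)) d) t := by
      have := (hf (a + t • d)).hasFDerivAt.comp_hasDerivAt t (hline t)
      rw [hinner] at this
      exact this
    have h2 : HasDerivAt (fun t : ℝ => t * inner ℝ (gradient f a) d)
        ((inner ℝ (gradient f a) d : ℝ)) t := by
      simpa using (hasDerivAt_id t).mul_const (inner ℝ (gradient f a) d : ℝ)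
    have h3 : HasDerivAt (fun t : ℝ => Lf / 2 * ‖d‖ ^ 2 * t ^ 2)
        (Lf * ‖d‖ ^ 2 * t) t := by
      have := (hasDerivAt_pow 2 t).const_mul (Lf / 2 * ‖d‖ ^ 2)
      have e : Lf * ‖d‖ ^ 2 * t = Lf / 2 * ‖d‖ ^ 2 * (((2:ℕ):ℝ) * t ^ (2 - 1)) := by
        push_cast; ring
      rw [e]
      exact this
    exact (h1.sub h2).sub h3
  have hanti : AntitoneOn φ (Set.Icc (0:ℝ) 1) := by
    apply antitoneOn_of_deriv_nonpos (convex_Icc 0 1)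
    · exact (Continuous.continuousOn (by
        have := hf.continuous; fun_prop : Continuous φ))
    · intro t _
      exact ((hderiv t).differentiableAt).differentiableWithinAt
    · intro t ht
      rw [interior_Icc] at ht
      rw [(hderiv t).deriv]
      have key : (inner ℝ (gradient f (a + t • d)) d : ℝ) - inner ℝ (gradient f a) d
          ≤ Lf * ‖d‖ ^ 2 * t := by
        rw [← inner_sub_left]
        calc (inner ℝ (gradient f (a + t • d) - gradient f a) d : ℝ)
            ≤ ‖gradient f (a + t • d) - gradient f a‖ * ‖d‖ := real_inner_le_norm _ _
          _ ≤ (Lf * ‖a + t • d - a‖) * ‖d‖ :=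
              mul_le_mul_of_nonneg_right (hlip _ _) (norm_nonneg d)
          _ = Lf * ‖d‖ ^ 2 * t := by
              have h : a + t • d - a = t • d := by abel
              rw [h, norm_smul, Real.norm_eq_abs, abs_of_pos ht.1]
              ring
      linarith
  have h01 : φ 1 ≤ φ 0 := hanti (by norm_num) (by norm_num) (by norm_num)
  have e1 : a + (1:ℝ) • d = b := by rw [one_smul, hd]; abel
  have e0 : a + (0:ℝ) • d = a := by simp
  simp only [hφ, e1, e0, one_mul, one_pow, mul_one, zero_mul, mul_zero, sub_zero,
    ne_eq] at h01
  linarith [h01]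

/-- Sufficient decrease of the prox-linear subproblem: if x⁺ minimizes
y ↦ f(xᵏ) + ⟪∇f(xᵏ), y - xᵏ⟫ + (Lₖ/2)‖y - xᵏ‖² + w(y) with w convex and
∇f L_f-Lipschitz, then f(x⁺) + w(x⁺) ≤ f(xᵏ) + w(xᵏ) - (Lₖ - L_f/2)‖x⁺ - xᵏ‖². -/
theorem stmt_15 (n : ℕ) (Lf Lk : ℝ) (hLf : 0 < Lf) (hLk : 0 < Lk)
    (f w : EuclideanSpace ℝ (Fin n) → ℝ) (hf : Differentiable ℝ f)
    (hlip : ∀ a b : EuclideanSpace ℝ (Fin n), ‖gradient f a - gradient f b‖ ≤ Lf * ‖a - b‖)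
    (hw : ConvexOn ℝ Set.univ w)
    (xk x1 : EuclideanSpace ℝ (Fin n))
    (hmin : ∀ y : EuclideanSpace ℝ (Fin n),
      f xk + inner ℝ (gradient f xk) (x1 - xk) + (Lk / 2) * ‖x1 - xk‖ ^ 2 + w x1 ≤
        f xk + inner ℝ (gradient f xk) (y - xk) + (Lk / 2) * ‖y - xk‖ ^ 2 + w y) :
    f x1 + w x1 ≤ f xk + w xk - (Lk - Lf / 2) * ‖x1 - xk‖ ^ 2 := by
  set g := gradient f xk with hg
  set u := x1 - xk with hu
  have hdesc : f x1 ≤ f xk + inner ℝ g u + Lf / 2 * ‖u‖ ^ 2 :=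
    descent_lemma f hf Lf hLf.le hlip xk x1
  -- strong convexity at the minimizer: ⟪g,u⟫ + Lk‖u‖² + w x1 ≤ w xk
  have hsc : (inner ℝ g u : ℝ) + Lk * ‖u‖ ^ 2 + w x1 ≤ w xk := by
    have key : ∀ t : ℝ, t ∈ Set.Ioo (0:ℝ) 1 →
        (inner ℝ g u : ℝ) + Lk / 2 * (2 - t) * ‖u‖ ^ 2 + w x1 ≤ w xk := by
      intro t ht
      obtain ⟨ht0, ht1⟩ := ht
      set z := (1 - t) • x1 + t • xk with hz
      have hz1 : z - xk = (1 - t) • u := by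
        rw [hz, hu]; module
      have h1 := hmin z
      have hwz : w z ≤ (1 - t) * w x1 + t * w xk := by
        have := hw.2 (Set.mem_univ x1) (Set.mem_univ xk) (by linarith : (0:ℝ) ≤ 1 - t)
          ht0.le (by ring : (1 - t) + t = 1)
        simpa [hz, smul_eq_mul] using this
      rw [hz1] at h1
      have hin : (inner ℝ g ((1 - t) • u) : ℝ) = (1 - t) * inner ℝ g u := real_inner_smul_right _ _ _
      have hnorm : ‖(1 - t) • u‖ ^ 2 = (1 - t) ^ 2 * ‖u‖ ^ 2 := by
        rw [norm_smul, Real.norm_eq_abs, abs_of_pos (by linarith), mul_pow]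
      rw [hin, hnorm] at h1
      -- h1 : f xk + ⟪g,u⟫ + Lk/2‖u‖² + w x1 ≤ f xk + (1-t)⟪g,u⟫ + Lk/2(1-t)²‖u‖² + w z
      have h2 : t * (inner ℝ g u : ℝ) + Lk / 2 * (1 - (1-t)^2) * ‖u‖ ^ 2 + t * w x1 ≤ t * w xk := by
        nlinarith [h1, hwz]
      have h3 : t * ((inner ℝ g u : ℝ) + Lk / 2 * (2 - t) * ‖u‖ ^ 2 + w x1) ≤ t * w xk := by
        nlinarith [h2]
      exact le_of_mul_le_mul_left (by linarith [h3]) ht0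
    have hlim : Filter.Tendsto
        (fun t : ℝ => (inner ℝ g u : ℝ) + Lk / 2 * (2 - t) * ‖u‖ ^ 2 + w x1)
        (nhdsWithin 0 (Set.Ioi 0)) (nhds ((inner ℝ g u : ℝ) + Lk * ‖u‖ ^ 2 + w x1)) := by
      have : Filter.Tendsto
          (fun t : ℝ => (inner ℝ g u : ℝ) + Lk / 2 * (2 - t) * ‖u‖ ^ 2 + w x1)
          (nhds 0) (nhds ((inner ℝ g u : ℝ) + Lk / 2 * (2 - 0) * ‖u‖ ^ 2 + w x1)) :=
        ((tendsto_const_nhds.add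
          ((((tendsto_const_nhds.sub Filter.tendsto_id).const_mul (Lk / 2)).mul_const
            (‖u‖ ^ 2)))).add tendsto_const_nhds)
      have h2 : (inner ℝ g u : ℝ) + Lk / 2 * (2 - 0) * ‖u‖ ^ 2 + w x1
          = (inner ℝ g u : ℝ) + Lk * ‖u‖ ^ 2 + w x1 := by ring
      rw [h2] at this
      exact this.mono_left nhdsWithin_le_nhds
    refine le_of_tendsto hlim ?_
    filter_upwards [Ioo_mem_nhdsGT_of_mem (by norm_num : (0:ℝ) ∈ Set.Ico (0:ℝ) 1)] with t ht
      using key t ht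
  linarith
end
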